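/- For natural numbers n ≥ 2 and m ≥ 0: if n > m then the join of 1^n and 1^m 2 in the Young–Fibonacci lattice equals 2^{m+1} 1^{n−m−1}, and if n ≤ m then it equals 2^{n−1} 1^{m−n+1} 2. -/

import Mathlib

inductive YFDigit : Type
  | one : YFDigit
  | two : YFDigit
  deriving DecidableEq, Repr

abbrev YFWord := List YFDigit

namespace YFWord

/-- value of a digit -/
def digitVal : YFDigit → ℕ
  | .one => 1
  | .two => 2

/-- digit sum of a word -/
def dsum (v : YFWord) : ℕ := (v.map digitVal).sum

/-- number of 2's in a word -/
def twos (v : YFWord) : ℕ := v.count YFDigit.two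

/-- longest common prefix of two lists -/
def commonPrefix : YFWord → YFWord → YFWord
  | a :: x, b :: y => if a = b then a :: commonPrefix x y else []
  | _, _ => []

/-- longest common suffix -/
def lcs (x y : YFWord) : YFWord := (commonPrefix x.reverse y.reverse).reverse

/-- the prefix of `x` remaining after deleting the longest common suffix of `x` and `y` -/
def rem (x y : YFWord) : YFWord := x.take (x.length - (lcs x y).length)

/-- the Young–Fibonacci order: x ≤ y iff, after removing the longest common suffix,
the remaining prefix of `y` has at least as many 2's as the remaining prefix of `x` has digits -/
def yfLE (x y : YFWord) : Prop := (rem x y).length ≤ twos (rem y x)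

/-- strict Young–Fibonacci order -/
def yfLT (x y : YFWord) : Prop := yfLE x y ∧ ¬ yfLE y x

/-- `y` covers `x` in the Young–Fibonacci order -/
def covers (x y : YFWord) : Prop := yfLT x y ∧ ∀ z, ¬ (yfLT x z ∧ yfLT z y)

end YFWord

open YFWord

/-- `j` is the least upper bound of `u` and `v` in the Young–Fibonacci order -/
def isJoin (u v j : YFWord) : Prop :=
  yfLE u j ∧ yfLE v j ∧ ∀ y : YFWord, yfLE u y → yfLE v y → yfLE j y

/-!
Write `#₂ w` for the number of 2's of `w`. Then `x ≤ y` holds iff `x = x' ++ s` and `y = y' ++ s`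
for some common suffix `s` (not necessarily the longest one) with `|x'| ≤ #₂ y'`: shortening the
common suffix lengthens both prefixes by the same word, which adds at least as many digits to `x'`
as 2's to `y'`. Hence an upper bound of `1ⁿ` has the form `y' 1ᵃ` with `n ≤ #₂ y' + a`, and an
upper bound of `1ᵐ2` has at least `m + 1` twos or has the form `y' 1ᵇ 2` with `m ≤ #₂ y' + b`.
Words with different last digits have no common suffix, so an upper bound of `1ᵐ2` ending in `1`
has `m + 1` twos, and an upper bound of `1ⁿ` ending in `2` has `n` twos. In both cases the claimed
join lies below every common upper bound through a common suffix made of ones (followed by the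
final `2` when `n ≤ m`).
-/

open List YFDigit

namespace YFWord

@[simp] lemma twos_append (u v : YFWord) : twos (u ++ v) = twos u + twos v :=
  List.count_append

@[simp] lemma twos_replicate_one (k : ℕ) : twos (replicate k one) = 0 := by
  simp [twos, count_replicate]

@[simp] lemma twos_replicate_two (k : ℕ) : twos (replicate k two) = k := by
  simp [twos]

@[simp] lemma twos_singleton_one : twos [one] = 0 := rfl

@[simp] lemma twos_singleton_two : twos [two] = 1 := rfl

lemma twos_le_length (v : YFWord) : twos v ≤ v.length := count_le_length

lemma commonPrefix_comm (a b : YFWord) : commonPrefix a b = commonPrefix b a := by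
  induction a generalizing b with
  | nil => cases b <;> rfl
  | cons c x ih =>
    cases b with
    | nil => rfl
    | cons d y =>
      by_cases h : c = d
      · subst h; simp [commonPrefix, ih]
      · simp [commonPrefix, h, Ne.symm h]

lemma commonPrefix_prefix_left (a b : YFWord) : commonPrefix a b <+: a := by
  induction a generalizing b with
  | nil => cases b <;> simp [commonPrefix]
  | cons c x ih =>
    cases b with
    | nil => simp [commonPrefix]
    | cons d y =>
      by_cases h : c = d
      · simpa [commonPrefix, h] using ih y
      · simp [commonPrefix, h]

lemma prefix_commonPrefix {p a b : YFWord} (ha : p <+: a) (hb : p <+: b) :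
    p <+: commonPrefix a b := by
  induction p generalizing a b with
  | nil => exact nil_prefix
  | cons c p ih =>
    obtain ⟨a', rfl, ha'⟩ := cons_prefix_iff.mp ha
    obtain ⟨b', rfl, hb'⟩ := cons_prefix_iff.mp hb
    simpa [commonPrefix] using ih ha' hb'

lemma lcs_comm (x y : YFWord) : lcs x y = lcs y x :=
  congrArg reverse (commonPrefix_comm _ _)

lemma lcs_suffix_left (x y : YFWord) : lcs x y <:+ x := by
  simpa [lcs] using reverse_suffix.mpr (commonPrefix_prefix_left x.reverse y.reverse)

lemma suffix_lcs {s x y : YFWord} (hx : s <:+ x) (hy : s <:+ y) : s <:+ lcs x y := by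
  simpa [lcs] using
    reverse_suffix.mpr (prefix_commonPrefix (reverse_prefix.mpr hx) (reverse_prefix.mpr hy))

lemma rem_append_lcs (x y : YFWord) : rem x y ++ lcs x y = x := by
  rw [rem]
  nth_rw 2 [suffix_iff_eq_drop.mp (lcs_suffix_left x y)]
  exact take_append_drop _ _

lemma yfLE_iff_exists_append {x y : YFWord} :
    yfLE x y ↔ ∃ x' y' s, x = x' ++ s ∧ y = y' ++ s ∧ x'.length ≤ twos y' := by
  constructor
  · intro h
    refine ⟨rem x y, rem y x, lcs x y, (rem_append_lcs x y).symm, ?_, h⟩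
    rw [lcs_comm]
    exact (rem_append_lcs y x).symm
  · rintro ⟨x', y', s, rfl, rfl, h⟩
    obtain ⟨t, hts⟩ := suffix_lcs (suffix_append x' s) (suffix_append y' s)
    have hx' : rem (x' ++ s) (y' ++ s) ++ t = x' := by
      have := rem_append_lcs (x' ++ s) (y' ++ s)
      rw [← hts, ← append_assoc] at this
      exact append_cancel_right this
    have hy' : rem (y' ++ s) (x' ++ s) ++ t = y' := by
      have := rem_append_lcs (y' ++ s) (x' ++ s)
      rw [lcs_comm, ← hts, ← append_assoc] at this
      exact append_cancel_right this
    have hlen := congrArg length hx'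
    have htwos := congrArg twos hy'
    rw [length_append] at hlen
    rw [twos_append] at htwos
    have := twos_le_length t
    unfold yfLE
    omega

lemma yfLE_of_length_le_twos {x y : YFWord} (h : x.length ≤ twos y) : yfLE x y :=
  yfLE_iff_exists_append.mpr ⟨x, y, [], (append_nil x).symm, (append_nil y).symm, h⟩

lemma yfLE_append_singleton_iff_of_ne {x y : YFWord} {d e : YFDigit} (h : d ≠ e) :
    yfLE (x ++ [d]) (y ++ [e]) ↔ x.length + 1 ≤ twos (y ++ [e]) := by
  have hlcs : lcs (x ++ [d]) (y ++ [e]) = [] := by simp [lcs, commonPrefix, h]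
  simp only [yfLE, rem, lcs_comm (y ++ [e]), hlcs, length_nil, Nat.sub_zero, take_length]
  simp

lemma yfLE_append_replicate_one_append {x' y' t : YFWord} {p q : ℕ}
    (h : x'.length + (p - q) ≤ twos y') :
    yfLE (x' ++ replicate p one ++ t) (y' ++ replicate q one ++ t) := by
  have split (w : YFWord) (k : ℕ) (hk : min p q ≤ k) :
      w ++ replicate k one ++ t =
        w ++ replicate (k - min p q) one ++ (replicate (min p q) one ++ t) := by
    conv_lhs => rw [← Nat.sub_add_cancel hk, replicate_add]
    simp only [append_assoc]
  rw [split x' p (min_le_left p q), split y' q (min_le_right p q)]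
  exact yfLE_iff_exists_append.mpr ⟨_, _, _, rfl, rfl, by simp; omega⟩

lemma exists_of_replicate_one_yfLE {n : ℕ} {y : YFWord} (h : yfLE (replicate n one) y) :
    ∃ y' a, y = y' ++ replicate a one ∧ n ≤ twos y' + a := by
  obtain ⟨x', y', s, hx, rfl, hle⟩ := yfLE_iff_exists_append.mp h
  obtain ⟨hlen, -, hs⟩ := append_eq_replicate_iff.mp hx.symm
  exact ⟨y', s.length, by rw [← hs], by omega⟩

lemma exists_of_replicate_one_append_two_yfLE {m : ℕ} {y : YFWord}
    (h : yfLE (replicate m one ++ [two]) y) :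
    m + 1 ≤ twos y ∨ ∃ y' b, y = y' ++ replicate b one ++ [two] ∧ m ≤ twos y' + b := by
  obtain ⟨x', y', s, hx, rfl, hle⟩ := yfLE_iff_exists_append.mp h
  rcases eq_nil_or_concat s with rfl | ⟨s', d, rfl⟩
  · left
    simp only [append_nil] at hx hle ⊢
    simpa [← hx] using hle
  · right
    rw [concat_eq_append, ← append_assoc] at hx
    obtain ⟨hx', ⟨⟩⟩ := append_inj' hx rfl
    obtain ⟨hlen, -, hs⟩ := append_eq_replicate_iff.mp hx'.symm
    exact ⟨y', s'.length, by rw [← hs, append_assoc, concat_eq_append], by omega⟩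

end YFWord

lemma isJoin_replicate_one_of_lt {n m : ℕ} (hmn : m < n) :
    isJoin (replicate n one) (replicate m one ++ [two])
      (replicate (m + 1) two ++ replicate (n - m - 1) one) := by
  refine ⟨?_, yfLE_of_length_le_twos (by simp), fun y hy₁ hy₂ => ?_⟩
  · simpa using yfLE_append_replicate_one_append (x' := []) (y' := replicate (m + 1) two)
      (t := []) (p := n) (q := n - m - 1) (by simp; omega)
  · obtain ⟨y', a, rfl, hle⟩ := exists_of_replicate_one_yfLE hy₁
    have hends_one : 0 < a → m + 1 ≤ twos y' := by
      intro ha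
      obtain ⟨a, rfl⟩ := Nat.exists_eq_add_of_lt ha
      rw [zero_add, replicate_succ', ← append_assoc,
        yfLE_append_singleton_iff_of_ne (by decide)] at hy₂
      simpa using hy₂
    simpa using yfLE_append_replicate_one_append (x' := replicate (m + 1) two) (y' := y')
      (t := []) (p := n - m - 1) (q := a) (by simp; omega)

lemma isJoin_replicate_one_of_le {n m : ℕ} (hn : 1 ≤ n) (hnm : n ≤ m) :
    isJoin (replicate n one) (replicate m one ++ [two])
      (replicate (n - 1) two ++ replicate (m - n + 1) one ++ [two]) := by
  refine ⟨yfLE_of_length_le_twos (by simp; omega), ?_, fun y hy₁ hy₂ => ?_⟩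
  · simpa using yfLE_append_replicate_one_append (x' := []) (y' := replicate (n - 1) two)
      (p := m) (q := m - n + 1) (by simp; omega)
  · rcases exists_of_replicate_one_append_two_yfLE hy₂ with htwos | ⟨y', b, rfl, hle⟩
    · exact yfLE_of_length_le_twos (by simp; omega)
    · have hends_two : n ≤ twos y' + 1 := by
        obtain ⟨k, rfl⟩ := Nat.exists_eq_add_of_le' hn
        rw [replicate_succ', yfLE_append_singleton_iff_of_ne (by decide)] at hy₁
        simpa using hy₁
      exact yfLE_append_replicate_one_append (by simp; omega)

theorem yf_join_ones_onestwo (n m : ℕ) (hn : 2 ≤ n) :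
    (m < n → isJoin (List.replicate n YFDigit.one)
        (List.replicate m YFDigit.one ++ [YFDigit.two])
        (List.replicate (m + 1) YFDigit.two ++ List.replicate (n - m - 1) YFDigit.one)) ∧
    (n ≤ m → isJoin (List.replicate n YFDigit.one)
        (List.replicate m YFDigit.one ++ [YFDigit.two])
        (List.replicate (n - 1) YFDigit.two ++ List.replicate (m - n + 1) YFDigit.one
          ++ [YFDigit.two])) :=
  ⟨isJoin_replicate_one_of_lt, isJoin_replicate_one_of_le (by omega)⟩
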